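/- For every F ⊆ E, the rank of F in M_D equals the rank of K := Ch_D(F) in the chain-decomposition matroid M_D⟨K⟩, i.e., rk_D(F) = rk_{M_D⟨K⟩}(K). -/

import Mathlib

variable {α : Type*}

/-- The rank (in `ℕ∞`) of a subset `X`: the largest size of an independent subset
of `X`. -/
noncomputable def erank (M : Matroid α) (X : Set α) : ℕ∞ :=
  ⨆ I ∈ {I : Set α | M.Indep I ∧ I ⊆ X}, I.encard

/-- A circuit of a matroid is an inclusion-wise minimal dependent set. -/
def Matroid.IsCircuit' (M : Matroid α) (C : Set α) : Prop :=
  M.Dep C ∧ ∀ ⦃D : Set α⦄, D ⊂ C → M.Indep D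

/-- The union of the levels `T 0, …, T (s-1)`. -/
def prevT (T : ℕ → Set α) (s : ℕ) : Set α := ⋃ j ∈ Finset.range s, T j

/-- The `≽`-maximal elements of `X`. -/
def heads (pref : α → α → Prop) (X : Set α) : Set α := {e ∈ X | ∀ f ∈ X, pref e f}

/-- The `≽`-minimal elements of `X`. -/
def tails (pref : α → α → Prop) (X : Set α) : Set α := {e ∈ X | ∀ f ∈ X, pref f e}

/-- `e ≻ f`: strict preference. -/
def SPref (pref : α → α → Prop) (e f : α) : Prop := pref e f ∧ ¬ pref f e

/-- The level decomposition of `F` produced by Algorithm 1: each level `T s`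
consists of the `≽`-maximal elements of what remains of `F` after removing the
earlier levels, and the levels exhaust `F`. -/
def IsLevels (pref : α → α → Prop) (F : Set α) (k : ℕ) (T : ℕ → Set α) : Prop :=
  prevT T k = F ∧ ∀ s < k, T s = heads pref (F \ prevT T s)

/-- Independence in the chain-decomposition matroid `M⟨F⟩` (the direct sum of the
minors `M_s = (M|(T 0 ∪ ⋯ ∪ T s)) / (T 0 ∪ ⋯ ∪ T (s-1))`): `I ⊆ F` and each
block `I ∩ T s` is independent in `M_s`, i.e. satisfies the contraction rank
condition `rk((I ∩ T s) ∪ prevT s) = rk(prevT s) + |I ∩ T s|`. -/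
def ChainIndep (M : Matroid α) (k : ℕ) (T : ℕ → Set α) (I : Set α) : Prop :=
  I ⊆ prevT T k ∧
  ∀ s < k, erank M ((I ∩ T s) ∪ prevT T s) = erank M (prevT T s) + (I ∩ T s).encard

/-- A base of the chain-decomposition matroid: a maximal independent set. -/
def ChainBase (M : Matroid α) (k : ℕ) (T : ℕ → Set α) (B : Set α) : Prop :=
  ChainIndep M k T B ∧ ∀ J : Set α, ChainIndep M k T J → B ⊆ J → J = B

/-- A circuit of the chain-decomposition matroid: a minimal dependent set. -/
def ChainCircuit (M : Matroid α) (k : ℕ) (T : ℕ → Set α) (C : Set α) : Prop :=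
  C ⊆ prevT T k ∧ ¬ ChainIndep M k T C ∧ ∀ ⦃D : Set α⦄, D ⊂ C → ChainIndep M k T D

/-- The greedy choice set `Ch(F)` (Algorithm 3): an element `e` of the level `T s`
belongs to `Ch(F)` iff `{e}` is independent in the contraction of `M` by the
earlier levels `T 0 ∪ ⋯ ∪ T (s-1)`. -/
def chooseSet (M : Matroid α) (k : ℕ) (T : ℕ → Set α) : Set α :=
  {e | ∃ s < k, e ∈ T s ∧ erank M ({e} ∪ prevT T s) = erank M (prevT T s) + 1}

/-!
Both sides equal the rank of `F`. An element of a level of `F` that is not chosen lies in the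
closure of the earlier levels, so `Ch(F)` spans `F`. For a base `B` of `M⟨K⟩`, maximality forces
`B ∩ T' s` to span the level `T' s` over the earlier levels; together with the contraction rank
condition this makes the rank of the union of the first `s` levels of `K` grow by exactly
`|B ∩ T' s|` at each step, so `|B| = rk K`.
-/

open Set Matroid

variable {M : Matroid α} {T : ℕ → Set α} {k s t : ℕ} {X Y B I : Set α} {e : α}

lemma erank_eq_eRk (M : Matroid α) (X : Set α) : erank M X = M.eRk X := by
  obtain ⟨I, hI⟩ := M.exists_isBasis' X
  refine le_antisymm (iSup₂_le fun J hJ => hJ.1.encard_le_eRk_of_subset hJ.2) ?_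
  rw [← hI.encard_eq_eRk]
  exact le_iSup₂_of_le I ⟨hI.indep, hI.subset⟩ le_rfl

lemma eRk_eq_of_subset_of_subset_closure (hXY : X ⊆ Y) (hYX : Y ⊆ M.closure X) :
    M.eRk Y = M.eRk X :=
  le_antisymm ((M.eRk_mono hYX).trans_eq (M.eRk_closure_eq X)) (M.eRk_mono hXY)

lemma mem_prevT : e ∈ prevT T s ↔ ∃ j < s, e ∈ T j := by
  simp [prevT]

lemma prevT_zero (T : ℕ → Set α) : prevT T 0 = ∅ := by
  simp [prevT]

lemma prevT_succ (T : ℕ → Set α) (s : ℕ) : prevT T (s + 1) = prevT T s ∪ T s := by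
  ext e
  simp only [mem_prevT, mem_union, Nat.lt_succ_iff_lt_or_eq, or_and_right, exists_or,
    exists_eq_left]

lemma prevT_mono (T : ℕ → Set α) (h : s ≤ t) : prevT T s ⊆ prevT T t := fun _ he =>
  let ⟨j, hj, hej⟩ := mem_prevT.1 he
  mem_prevT.2 ⟨j, hj.trans_le h, hej⟩

lemma subset_prevT (T : ℕ → Set α) (h : t < s) : T t ⊆ prevT T s := fun _ he =>
  mem_prevT.2 ⟨t, h, he⟩

lemma disjoint_levels (hdisj : ∀ s < k, Disjoint (T s) (prevT T s)) (hs : s < k) (ht : t < k)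
    (hst : s ≠ t) : Disjoint (T s) (T t) := by
  rcases hst.lt_or_gt with h | h
  · exact ((hdisj t ht).mono_right (subset_prevT T h)).symm
  · exact (hdisj s hs).mono_right (subset_prevT T h)

lemma IsLevels.disjoint_prevT {pref : α → α → Prop} {F : Set α} (hT : IsLevels pref F k T) :
    ∀ s < k, Disjoint (T s) (prevT T s) := fun s hs => by
  rw [hT.2 s hs]
  exact disjoint_sdiff_left.mono_left fun _ he => he.1

lemma chooseSet_subset_prevT : chooseSet M k T ⊆ prevT T k := fun _ ⟨_, hs, he, _⟩ =>
  subset_prevT T hs he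

lemma mem_closure_prevT_of_notMem_chooseSet (hs : s < k) (heT : e ∈ T s) (heE : e ∈ M.E)
    (heK : e ∉ chooseSet M k T) : e ∈ M.closure (prevT T s) := by
  by_contra hcl
  refine heK ⟨s, hs, heT, ?_⟩
  rw [singleton_union, erank_eq_eRk, erank_eq_eRk]
  exact M.eRk_insert_eq_add_one ⟨heE, hcl⟩

lemma prevT_subset_closure_chooseSet (hE : prevT T k ⊆ M.E) :
    ∀ s ≤ k, prevT T s ⊆ M.closure (chooseSet M k T) := by
  intro s
  induction s with
  | zero => simp [prevT_zero]
  | succ s ih =>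
    intro (hs : s < k) e he
    have heE : e ∈ M.E := hE (prevT_mono T hs he)
    rw [prevT_succ] at he
    rcases he with heP | heT
    · exact ih hs.le heP
    · by_cases heK : e ∈ chooseSet M k T
      · exact M.mem_closure_of_mem' heK
      · exact M.closure_subset_closure_of_subset_closure (ih hs.le)
          (mem_closure_prevT_of_notMem_chooseSet hs heT heE heK)

lemma eRk_chooseSet (hE : prevT T k ⊆ M.E) : M.eRk (chooseSet M k T) = M.eRk (prevT T k) :=
  (eRk_eq_of_subset_of_subset_closure chooseSet_subset_prevT
    (prevT_subset_closure_chooseSet hE k le_rfl)).symm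

lemma ChainIndep.insert (hI : ChainIndep M k T I) (hdisj : ∀ s < k, Disjoint (T s) (prevT T s))
    (hs : s < k) (heT : e ∈ T s) (heE : e ∈ M.E)
    (hecl : e ∉ M.closure ((I ∩ T s) ∪ prevT T s)) : ChainIndep M k T (insert e I) := by
  refine ⟨insert_subset (subset_prevT T hs heT) hI.1, fun t ht => ?_⟩
  by_cases hts : t = s
  · subst hts
    have heI : e ∉ I ∩ T t := fun h => hecl (M.mem_closure_of_mem' (Or.inl h))
    have hIt := hI.2 t ht
    simp only [erank_eq_eRk] at hIt ⊢
    rw [insert_inter_of_mem heT, insert_union, M.eRk_insert_eq_add_one ⟨heE, hecl⟩, hIt,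
      encard_insert_of_notMem heI, add_assoc]
  · have heT' : e ∉ T t := (disjoint_levels hdisj hs ht (Ne.symm hts)).notMem_of_mem_left heT
    rw [insert_inter_of_notMem heT']
    exact hI.2 t ht

lemma ChainBase.subset_closure (hB : ChainBase M k T B)
    (hdisj : ∀ s < k, Disjoint (T s) (prevT T s)) (hE : prevT T k ⊆ M.E) (hs : s < k) :
    T s ⊆ M.closure ((B ∩ T s) ∪ prevT T s) := by
  intro e heT
  by_contra hecl
  have heB := hB.2 _ (hB.1.insert hdisj hs heT (hE (subset_prevT T hs heT)) hecl)
    (subset_insert e B) ▸ mem_insert e B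
  exact hecl (M.mem_closure_of_mem' (Or.inl ⟨heB, heT⟩) (hE (subset_prevT T hs heT)))

lemma ChainBase.eRk_prevT (hB : ChainBase M k T B) (hdisj : ∀ s < k, Disjoint (T s) (prevT T s))
    (hE : prevT T k ⊆ M.E) :
    ∀ s ≤ k, M.eRk (prevT T s) = (B ∩ prevT T s).encard := by
  intro s
  induction s with
  | zero => simp [prevT_zero]
  | succ s ih =>
    intro (hs : s < k)
    have hblock := hB.1.2 s hs
    simp only [erank_eq_eRk] at hblock
    have hspan : prevT T s ∪ T s ⊆ M.closure ((B ∩ T s) ∪ prevT T s) :=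
      union_subset (M.subset_closure_of_subset' subset_union_right
        ((prevT_mono T hs.le).trans hE)) (hB.subset_closure hdisj hE hs)
    have hdisjB : Disjoint (B ∩ prevT T s) (B ∩ T s) :=
      ((hdisj s hs).mono inter_subset_right inter_subset_right).symm
    calc M.eRk (prevT T (s + 1))
        = M.eRk ((B ∩ T s) ∪ prevT T s) := by
          rw [prevT_succ]
          exact eRk_eq_of_subset_of_subset_closure
            (union_subset (inter_subset_right.trans subset_union_right) subset_union_left) hspan
      _ = (B ∩ prevT T s).encard + (B ∩ T s).encard := by rw [hblock, ih hs.le]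
      _ = (B ∩ prevT T (s + 1)).encard := by
          rw [prevT_succ, inter_union_distrib_left, encard_union_eq hdisjB]

lemma ChainBase.encard_eq (hB : ChainBase M k T B) (hdisj : ∀ s < k, Disjoint (T s) (prevT T s))
    (hE : prevT T k ⊆ M.E) : B.encard = M.eRk (prevT T k) := by
  rw [hB.eRk_prevT hdisj hE k le_rfl, inter_eq_left.2 hB.1.1]

theorem rank_chooseSet_eq_general (M : Matroid α) (pref : α → α → Prop)
    (F : Set α) (hF : F ⊆ M.E) (k : ℕ) (T : ℕ → Set α)
    (hT : IsLevels pref F k T)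
    (k' : ℕ) (T' : ℕ → Set α)
    (hT' : IsLevels pref (chooseSet M k T) k' T') :
    ∀ B : Set α, ChainBase M k' T' B → erank M F = B.encard := by
  intro B hB
  have hFE : prevT T k ⊆ M.E := hT.1 ▸ hF
  have hKE : prevT T' k' ⊆ M.E := hT'.1 ▸ chooseSet_subset_prevT.trans hFE
  rw [hB.encard_eq hT'.disjoint_prevT hKE, hT'.1, eRk_chooseSet hFE, hT.1, erank_eq_eRk]

/-- Lemma 15: with `K := Ch(F)`, the rank of `F` in `M` equals the rank of `K` in
the chain-decomposition matroid `M⟨K⟩`; that is, every base of `M⟨K⟩` has size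
`rk(F)`. -/
theorem rank_chooseSet_eq (M : Matroid α) (pref : α → α → Prop)
    (htrans : Transitive pref)
    (htotal : ∀ e ∈ M.E, ∀ f ∈ M.E, pref e f ∨ pref f e)
    (hsingle : ∀ e ∈ M.E, M.Indep {e})
    (F : Set α) (hF : F ⊆ M.E) (k : ℕ) (T : ℕ → Set α)
    (hT : IsLevels pref F k T)
    (k' : ℕ) (T' : ℕ → Set α)
    (hT' : IsLevels pref (chooseSet M k T) k' T') :
    ∀ B : Set α, ChainBase M k' T' B → erank M F = B.encard :=
  rank_chooseSet_eq_general M pref F hF k T hT k' T' hT'
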